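/- Let $P'(1) > 0$, $\eta+\mu > 0$, $\nu > 0$, and choose $\delta_* \in (0, \min\{1/2, (\eta+\mu)/2\}]$ and $b_0 \in (0, \sqrt{P'(1)/(\eta+\mu)}]$ with $\delta_* b_0 \le \min\{P'(1)/2, 1/2\}$. For $\xi$ with $|\xi| \le b_0$, define $\ell(\xi,t) = \frac{1}{2}\big(P'(1)|\hat{q}|^2 + |\hat{\Upsilon}|^2 + |\hat{M}|^2 - 2\delta_*|\xi|\mathrm{Re}(\hat{q}\overline{\hat{\Upsilon}})\big)$ where $(\hat{q},\hat{\Upsilon},\hat{M})$ solve the linear system $\partial_t\hat{q} + |\xi|\hat{\Upsilon}=0$, $\partial_t\hat{\Upsilon} - P'(1)|\xi|\hat{q} + (\eta+\mu)|\xi|^2\hat{\Upsilon}=0$, $\partial_t\hat{M} + \nu|\xi|^2\hat{M}=0$. Then there exists a constant $C_l > 0$ depending only on $P'(1),\eta,\mu,\nu,\delta_*$ such that $\ell(\xi,t) \le e^{-C_l|\xi|^2 t}\,\ell(\xi,0)$ for all $t \ge 0$ and $|\xi| \le b_0$. -/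

import Mathlib

/-!
Differentiating along the flow gives `ℓ' = -r² D` with the dissipation
`D = (a - δ)‖Υ‖² + ν‖M‖² + δ P'(1) ‖q‖² - δ a r ⟪Υ, q⟫`, where `a = η + μ` and `r = |ξ|`.
The cross term `-2δ r ⟪Υ, q⟫` in `ℓ` is what produces the damping `δ P'(1) ‖q‖²` of the density.
For `r` small it is dominated by the diagonal terms, both in `ℓ` (so `ℓ ≲ ‖q‖² + ‖Υ‖² + ‖M‖²`)
and in `D` (so `D ≳ ‖q‖² + ‖Υ‖² + ‖M‖²`); hence `D ≥ C_l ℓ`, and Gronwall closes the argument.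
-/

open Real

theorem le_exp_neg_mul_of_hasDerivAt_le_neg_mul {f f' : ℝ → ℝ} {c t : ℝ}
    (hf : ∀ s, HasDerivAt f (f' s) s) (hbound : ∀ s, f' s ≤ -c * f s) (ht : 0 ≤ t) :
    f t ≤ exp (-c * t) * f 0 := by
  have hG : ∀ s, HasDerivAt (fun s => exp (c * s) * f s)
      (exp (c * s) * (c * f s + f' s)) s := fun s => by
    refine ((((hasDerivAt_id s).const_mul c).exp).mul (hf s)).congr_deriv ?_
    simp only [id, mul_one]
    ring
  have hanti : Antitone (fun s => exp (c * s) * f s) :=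
    antitone_of_hasDerivAt_nonpos hG fun s =>
      mul_nonpos_of_nonneg_of_nonpos (exp_nonneg _) (by linarith [hbound s])
  calc f t = exp (-c * t) * (exp (c * t) * f t) := by
        rw [← mul_assoc, ← exp_add]; simp
    _ ≤ exp (-c * t) * (exp (c * 0) * f 0) := mul_le_mul_of_nonneg_left (hanti ht) (exp_nonneg _)
    _ = exp (-c * t) * f 0 := by simp

section ModifiedEnergy

variable {F : Type*} [NormedAddCommGroup F] [InnerProductSpace ℝ F]

local notation "⟪" x ", " y "⟫" => inner ℝ x y

noncomputable def modifiedEnergy (P1 δ r : ℝ) (q Υ M : F) : ℝ :=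
  (P1 * ‖q‖ ^ 2 + ‖Υ‖ ^ 2 + ‖M‖ ^ 2 - 2 * δ * r * ⟪Υ, q⟫) / 2

noncomputable def dissipation (P1 a ν δ r : ℝ) (q Υ M : F) : ℝ :=
  (a - δ) * ‖Υ‖ ^ 2 + ν * ‖M‖ ^ 2 + δ * P1 * ‖q‖ ^ 2 - δ * a * r * ⟪Υ, q⟫

theorem hasDerivAt_modifiedEnergy {P1 a ν δ r t : ℝ} {q Υ M : ℝ → F}
    (hq : ∀ s, HasDerivAt q ((-r) • Υ s) s)
    (hΥ : ∀ s, HasDerivAt Υ ((P1 * r) • q s - (a * r ^ 2) • Υ s) s)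
    (hM : ∀ s, HasDerivAt M ((-(ν * r ^ 2)) • M s) s) :
    HasDerivAt (fun s => modifiedEnergy P1 δ r (q s) (Υ s) (M s))
      (-r ^ 2 * dissipation P1 a ν δ r (q t) (Υ t) (M t)) t := by
  have h := (((((hq t).norm_sq.const_mul P1).add (hΥ t).norm_sq).add (hM t).norm_sq).sub
    (((hΥ t).inner ℝ (hq t)).const_mul (2 * δ * r))).div_const 2
  refine h.congr_deriv ?_
  simp only [dissipation, inner_sub_right, inner_smul_right, real_inner_self_eq_norm_sq,
    real_inner_comm (q t)]
  ring

theorem modifiedEnergy_le {P1 δ r : ℝ} (hδr : 0 ≤ δ * r) (hδr₁ : δ * r ≤ 1 / 2)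
    (hδrP : δ * r ≤ P1 / 2) (q Υ M : F) :
    modifiedEnergy P1 δ r q Υ M ≤ 3 / 4 * P1 * ‖q‖ ^ 2 + 3 / 4 * ‖Υ‖ ^ 2 + 1 / 2 * ‖M‖ ^ 2 := by
  have hcross : -(2 * ⟪Υ, q⟫) ≤ ‖q‖ ^ 2 + ‖Υ‖ ^ 2 := by
    nlinarith [neg_abs_le ⟪Υ, q⟫, abs_real_inner_le_norm Υ q, sq_nonneg (‖q‖ - ‖Υ‖)]
  have := mul_le_mul_of_nonneg_left hcross hδr
  have := mul_le_mul_of_nonneg_right hδrP (sq_nonneg ‖q‖)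
  have := mul_le_mul_of_nonneg_right hδr₁ (sq_nonneg ‖Υ‖)
  unfold modifiedEnergy
  linarith

theorem le_dissipation {P1 a ν δ r : ℝ} (ha : 0 ≤ a) (hδ : 0 ≤ δ) (hr : 0 ≤ r)
    (hδ₁ : δ ≤ 1 / 2) (hδa : δ ≤ a / 2) (har : a * r ^ 2 ≤ P1) (q Υ M : F) :
    δ * P1 / 2 * ‖q‖ ^ 2 + a / 4 * ‖Υ‖ ^ 2 + ν * ‖M‖ ^ 2 ≤ dissipation P1 a ν δ r q Υ M := by
  -- `P1 x² - 2 a r x y + a y² = (P1 - a r²) x² + a (r x - y)²`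
  have hcross : 2 * a * r * ⟪Υ, q⟫ ≤ P1 * ‖q‖ ^ 2 + a * ‖Υ‖ ^ 2 := by
    have := mul_le_mul_of_nonneg_left (le_trans (le_abs_self _) (abs_real_inner_le_norm Υ q))
      (by positivity : 0 ≤ 2 * a * r)
    nlinarith [mul_nonneg (sub_nonneg.2 har) (sq_nonneg ‖q‖),
      mul_nonneg ha (sq_nonneg (r * ‖q‖ - ‖Υ‖))]
  have := mul_le_mul_of_nonneg_left hcross hδ
  have := mul_le_mul_of_nonneg_right hδa (sq_nonneg ‖Υ‖)
  have := mul_le_mul_of_nonneg_right hδ₁ (mul_nonneg ha (sq_nonneg ‖Υ‖))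
  unfold dissipation
  linarith

theorem mul_modifiedEnergy_le_dissipation {P1 a ν δ r : ℝ} (ha : 0 < a) (hν : 0 ≤ ν)
    (hδ : 0 < δ) (hr : 0 ≤ r) (hδ₁ : δ ≤ 1 / 2) (hδa : δ ≤ a / 2) (har : a * r ^ 2 ≤ P1)
    (hδr₁ : δ * r ≤ 1 / 2) (hδrP : δ * r ≤ P1 / 2) (q Υ M : F) :
    min (2 * δ / 3) (min (a / 3) (2 * ν)) * modifiedEnergy P1 δ r q Υ M
      ≤ dissipation P1 a ν δ r q Υ M := by
  set C := min (2 * δ / 3) (min (a / 3) (2 * ν))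
  have hP1 : 0 ≤ P1 := le_trans (by positivity) har
  have hC : 0 ≤ C := le_min (by positivity) (le_min (by positivity) (by positivity))
  calc C * modifiedEnergy P1 δ r q Υ M
      ≤ C * (3 / 4 * P1 * ‖q‖ ^ 2 + 3 / 4 * ‖Υ‖ ^ 2 + 1 / 2 * ‖M‖ ^ 2) := by
        gcongr; exact modifiedEnergy_le (by positivity) hδr₁ hδrP q Υ M
    _ ≤ δ * P1 / 2 * ‖q‖ ^ 2 + a / 4 * ‖Υ‖ ^ 2 + ν * ‖M‖ ^ 2 := by
        have := mul_le_mul_of_nonneg_right (min_le_left _ _ : C ≤ 2 * δ / 3)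
          (mul_nonneg hP1 (sq_nonneg ‖q‖))
        have := mul_le_mul_of_nonneg_right
          ((min_le_right _ _).trans (min_le_left _ _) : C ≤ a / 3) (sq_nonneg ‖Υ‖)
        have := mul_le_mul_of_nonneg_right
          ((min_le_right _ _).trans (min_le_right _ _) : C ≤ 2 * ν) (sq_nonneg ‖M‖)
        linarith
    _ ≤ dissipation P1 a ν δ r q Υ M := le_dissipation ha.le hδ.le hr hδ₁ hδa har q Υ M

theorem modifiedEnergy_le_exp_mul {P1 a ν δ r t : ℝ} {q Υ M : ℝ → F} (ha : 0 < a) (hν : 0 ≤ ν)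
    (hδ : 0 < δ) (hr : 0 ≤ r) (hδ₁ : δ ≤ 1 / 2) (hδa : δ ≤ a / 2) (har : a * r ^ 2 ≤ P1)
    (hδr₁ : δ * r ≤ 1 / 2) (hδrP : δ * r ≤ P1 / 2)
    (hq : ∀ s, HasDerivAt q ((-r) • Υ s) s)
    (hΥ : ∀ s, HasDerivAt Υ ((P1 * r) • q s - (a * r ^ 2) • Υ s) s)
    (hM : ∀ s, HasDerivAt M ((-(ν * r ^ 2)) • M s) s) (ht : 0 ≤ t) :
    modifiedEnergy P1 δ r (q t) (Υ t) (M t)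
      ≤ exp (-(min (2 * δ / 3) (min (a / 3) (2 * ν)) * r ^ 2) * t)
        * modifiedEnergy P1 δ r (q 0) (Υ 0) (M 0) := by
  refine le_exp_neg_mul_of_hasDerivAt_le_neg_mul
    (fun s => hasDerivAt_modifiedEnergy hq hΥ hM) (fun s => ?_) ht
  have := mul_le_mul_of_nonneg_left
    (mul_modifiedEnergy_le_dissipation ha hν hδ hr hδ₁ hδa har hδr₁ hδrP (q s) (Υ s) (M s))
    (sq_nonneg r)
  linarith

end ModifiedEnergy

theorem low_freq_modified_energy_decay_general
    (P1 η μ ν δ b₀ : ℝ) (hP1 : 0 < P1) (hημ : 0 < η + μ) (hν : 0 < ν)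
    (hδ : 0 < δ) (hδle : δ ≤ min (1 / 2) ((η + μ) / 2))
    (hb₀le : b₀ ≤ Real.sqrt (P1 / (η + μ)))
    (hδb₀ : δ * b₀ ≤ min (P1 / 2) (1 / 2)) :
    ∃ Cl > (0 : ℝ), ∀ (ξ : EuclideanSpace ℝ (Fin 3)), ‖ξ‖ ≤ b₀ →
      ∀ (q Υ M : ℝ → ℂ),
      (∀ t : ℝ, HasDerivAt q (-(‖ξ‖ : ℂ) * Υ t) t) →
      (∀ t : ℝ, HasDerivAt Υ ((P1 : ℂ) * (‖ξ‖ : ℂ) * q t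
          - ((η + μ : ℝ) : ℂ) * (‖ξ‖ : ℂ) ^ 2 * Υ t) t) →
      (∀ t : ℝ, HasDerivAt M (-((ν : ℂ) * (‖ξ‖ : ℂ) ^ 2) * M t) t) →
      ∀ t : ℝ, 0 ≤ t →
        (P1 * ‖q t‖ ^ 2 + ‖Υ t‖ ^ 2 + ‖M t‖ ^ 2
            - 2 * δ * ‖ξ‖ * (q t * (starRingEnd ℂ) (Υ t)).re) / 2
          ≤ Real.exp (-Cl * ‖ξ‖ ^ 2 * t) *
            ((P1 * ‖q 0‖ ^ 2 + ‖Υ 0‖ ^ 2 + ‖M 0‖ ^ 2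
              - 2 * δ * ‖ξ‖ * (q 0 * (starRingEnd ℂ) (Υ 0)).re) / 2) := by
  refine ⟨min (2 * δ / 3) (min ((η + μ) / 3) (2 * ν)),
    lt_min (by positivity) (lt_min (by positivity) (by positivity)), ?_⟩
  intro ξ hξ q Υ M hq hΥ hM t ht
  have har : (η + μ) * ‖ξ‖ ^ 2 ≤ P1 := by
    have := (Real.le_sqrt (norm_nonneg ξ) (div_pos hP1 hημ).le).1 (hξ.trans hb₀le)
    rwa [le_div_iff₀ hημ, mul_comm] at this
  have hδr : δ * ‖ξ‖ ≤ min (P1 / 2) (1 / 2) := (mul_le_mul_of_nonneg_left hξ hδ.le).trans hδb₀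
  have hq' (s : ℝ) : HasDerivAt q ((-‖ξ‖) • Υ s) s := by
    simpa only [Complex.real_smul, Complex.ofReal_neg] using hq s
  have hΥ' (s : ℝ) :
      HasDerivAt Υ ((P1 * ‖ξ‖) • q s - ((η + μ) * ‖ξ‖ ^ 2) • Υ s) s := by
    simpa only [Complex.real_smul, Complex.ofReal_mul, Complex.ofReal_pow] using hΥ s
  have hM' (s : ℝ) : HasDerivAt M ((-(ν * ‖ξ‖ ^ 2)) • M s) s := by
    simpa only [Complex.real_smul, Complex.ofReal_neg, Complex.ofReal_mul, Complex.ofReal_pow]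
      using hM s
  simpa only [modifiedEnergy, Complex.inner, neg_mul] using
    modifiedEnergy_le_exp_mul hημ hν.le hδ (norm_nonneg ξ) (hδle.trans (min_le_left _ _))
      (hδle.trans (min_le_right _ _)) har (hδr.trans (min_le_right _ _))
      (hδr.trans (min_le_left _ _)) hq' hΥ' hM' ht

/-- Low-frequency exponential decay of the modified energy `ℓ(ξ,t)` for the
linearized compressible MHD system: `ℓ(ξ,t) ≤ e^{-C_l |ξ|² t} ℓ(ξ,0)` for `|ξ| ≤ b₀`. -/
theorem low_freq_modified_energy_decay
    (P1 η μ ν δ b₀ : ℝ) (hP1 : 0 < P1) (hημ : 0 < η + μ) (hν : 0 < ν)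
    (hδ : 0 < δ) (hδle : δ ≤ min (1 / 2) ((η + μ) / 2))
    (hb₀ : 0 < b₀) (hb₀le : b₀ ≤ Real.sqrt (P1 / (η + μ)))
    (hδb₀ : δ * b₀ ≤ min (P1 / 2) (1 / 2)) :
    ∃ Cl > (0 : ℝ), ∀ (ξ : EuclideanSpace ℝ (Fin 3)), ‖ξ‖ ≤ b₀ →
      ∀ (q Υ M : ℝ → ℂ),
      (∀ t : ℝ, HasDerivAt q (-(‖ξ‖ : ℂ) * Υ t) t) →
      (∀ t : ℝ, HasDerivAt Υ ((P1 : ℂ) * (‖ξ‖ : ℂ) * q t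
          - ((η + μ : ℝ) : ℂ) * (‖ξ‖ : ℂ) ^ 2 * Υ t) t) →
      (∀ t : ℝ, HasDerivAt M (-((ν : ℂ) * (‖ξ‖ : ℂ) ^ 2) * M t) t) →
      ∀ t : ℝ, 0 ≤ t →
        (P1 * ‖q t‖ ^ 2 + ‖Υ t‖ ^ 2 + ‖M t‖ ^ 2
            - 2 * δ * ‖ξ‖ * (q t * (starRingEnd ℂ) (Υ t)).re) / 2
          ≤ Real.exp (-Cl * ‖ξ‖ ^ 2 * t) *
            ((P1 * ‖q 0‖ ^ 2 + ‖Υ 0‖ ^ 2 + ‖M 0‖ ^ 2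
              - 2 * δ * ‖ξ‖ * (q 0 * (starRingEnd ℂ) (Υ 0)).re) / 2) :=
  low_freq_modified_energy_decay_general P1 η μ ν δ b₀ hP1 hημ hν hδ hδle hb₀le hδb₀
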